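/- For every integer l ≥ 2, one has χ_{l,l} = (−1)^l·σ_{l,l}. -/

import Mathlib

open Finset

/-- The coefficient `σ_{l,j}` from the paper (there written `σ_{l,i+1}` with `j = i+1`):
`σ_{l,j} = (-1)^{j-1} Σ_{p=0}^{j-2} (-1)^{p+1} Σ_{q=0}^{p+1} (-1)^q C(j,q)(p+1-q)^{l-1}`. -/
def sigmaCoeff (l j : ℕ) : ℚ :=
  (-1) ^ (j - 1) * ∑ p ∈ Finset.range (j - 1), (-1 : ℚ) ^ (p + 1) *
    ∑ q ∈ Finset.range (p + 2), (-1 : ℚ) ^ q * (j.choose q : ℚ) * ((p + 1 - q : ℕ) : ℚ) ^ (l - 1)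

/-- The coefficient `χ_{l,j}` from the paper (there written `χ_{l,i+1}` with `j = i+1`):
`χ_{l,j} = (-1)^{j-l} Σ_{k=1}^{j-1} ((2^{j-1}-2^{j-1-k})/(k+1)) Σ_{m=0}^{k+1} (-1)^m C(k+1,m) m^l`. -/
def chiCoeff (l j : ℕ) : ℚ :=
  (-1) ^ (j - l) * ∑ k ∈ Finset.Icc 1 (j - 1),
    ((2 ^ (j - 1) - 2 ^ (j - 1 - k) : ℚ) / ((k : ℚ) + 1)) *
      ∑ m ∈ Finset.range (k + 2), (-1 : ℚ) ^ m * ((k + 1).choose m : ℚ) * (m : ℚ) ^ l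

/-!
Write `l = n + 1`. Both `χ_{l,l}` and `(-1)^l σ_{l,l}` are alternating sums
`Σ_r ± (r+1)^n c_r`: for `χ` one absorbs the denominator `k+1` via `m C(k+1,m) = (k+1) C(k,m-1)`,
for `σ` one reads the inner sum as a convolution and exchanges the order of summation.
By the hockey-stick identity and `Σ_{k≤n} 2^(n-k) C(k,r) = Σ_{j≤n-r} C(n+1,j)`, the two
coefficient families add up to `(2^n - 1) C(n+1,r+1)`, so `χ_{l,l} - (-1)^l σ_{l,l}` is a
multiple of the `l`-th finite difference of `x ↦ x^n` at `0`, which vanishes since `n < l`.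
-/

variable {R : Type*} [CommRing R]

theorem neg_one_pow_mul_neg_one_pow_of_le {m N : ℕ} (h : m ≤ N) :
    (-1 : R) ^ N * (-1) ^ m = (-1) ^ (N - m) := by
  obtain ⟨k, rfl⟩ := Nat.exists_eq_add_of_le h
  rw [Nat.add_sub_cancel_left, pow_add, mul_right_comm, ← pow_add, ← two_mul, pow_mul, neg_one_sq,
    one_pow, one_mul]

theorem sum_range_choose_eq_choose_succ (n r : ℕ) :
    ∑ k ∈ range n, k.choose r = n.choose (r + 1) := by
  induction n with
  | zero => simp
  | succ n ih => rw [sum_range_succ, ih, Nat.choose_succ_succ', add_comm]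

theorem sum_range_succ_choose_succ (m t : ℕ) :
    ∑ j ∈ range (t + 1), (m + 1).choose j = 2 * ∑ j ∈ range t, m.choose j + m.choose t := by
  induction t with
  | zero => simp
  | succ t ih =>
    rw [sum_range_succ, ih, sum_range_succ, Nat.choose_succ_succ']
    ring

/-- Both sides count the subsets of `{0, …, n}` with more than `r` elements (the right side via
complements); on the left, `k` is the position of the `(r+1)`-st element. -/
theorem sum_range_two_pow_mul_choose (n r : ℕ) :
    ∑ k ∈ range (n + 1), 2 ^ (n - k) * k.choose r =
      ∑ j ∈ range (n + 1 - r), (n + 1).choose j := by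
  induction n generalizing r with
  | zero => cases r <;> simp
  | succ n ih =>
    have hdouble : ∑ k ∈ range (n + 1), 2 ^ (n + 1 - k) * k.choose r
        = 2 * ∑ k ∈ range (n + 1), 2 ^ (n - k) * k.choose r := by
      rw [mul_sum]
      refine sum_congr rfl fun k hk => ?_
      rw [Nat.sub_add_comm (mem_range_succ_iff.mp hk), pow_succ]
      ring
    rw [sum_range_succ, hdouble, ih, Nat.sub_self, pow_zero, one_mul]
    rcases le_or_gt r (n + 1) with hr | hr
    · rw [show n + 1 + 1 - r = n + 1 - r + 1 by omega, sum_range_succ_choose_succ,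
        Nat.choose_symm hr]
    · simp [Nat.choose_eq_zero_of_lt hr, show n + 1 + 1 - r = 0 by omega,
        show n + 1 - r = 0 by omega]

theorem sum_range_sub_two_pow_mul_choose_add {n r : ℕ} (hr : r ≤ n) :
    ∑ k ∈ range (n + 1), ((2 : R) ^ n - 2 ^ (n - k)) * k.choose r +
        ∑ j ∈ range (n - r), ((n + 1).choose j : R) =
      (2 ^ n - 1) * (n + 1).choose (r + 1) := by
  have hhockey : ∑ k ∈ range (n + 1), (k.choose r : R) = (n + 1).choose (r + 1) := by
    exact_mod_cast congrArg (Nat.cast : ℕ → R) (sum_range_choose_eq_choose_succ (n + 1) r)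
  have hweighted : ∑ k ∈ range (n + 1), (2 : R) ^ (n - k) * k.choose r =
      ∑ j ∈ range (n - r), ((n + 1).choose j : R) + (n + 1).choose (r + 1) := by
    rw [← Nat.choose_symm_of_eq_add (by omega : n + 1 = (n - r) + (r + 1)), ← sum_range_succ,
      ← Nat.sub_add_comm hr]
    exact_mod_cast congrArg (Nat.cast : ℕ → R) (sum_range_two_pow_mul_choose n r)
  simp only [sub_mul, sum_sub_distrib, ← mul_sum, hhockey, hweighted]
  ring

theorem sum_range_neg_one_pow_mul_choose_mul_pow_eq_zero {N j : ℕ} (h : j < N) :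
    ∑ m ∈ range (N + 1), (-1 : R) ^ m * N.choose m * (m : R) ^ j = 0 := by
  have hdiff := fwdDiff_iter_eq_sum_shift (h := (1 : R)) (fun x => x ^ j) N 0
  rw [fwdDiff_iter_pow_eq_zero_of_lt h, Pi.zero_apply] at hdiff
  calc ∑ m ∈ range (N + 1), (-1 : R) ^ m * N.choose m * (m : R) ^ j
      = (-1) ^ N * ∑ m ∈ range (N + 1), ((-1 : ℤ) ^ (N - m) * N.choose m) • (0 + m • 1 : R) ^ j := by
        rw [mul_sum]
        refine sum_congr rfl fun m hm => ?_
        have hsign := neg_one_pow_mul_neg_one_pow_of_le (R := R) (Nat.sub_le N m)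
        rw [Nat.sub_sub_self (mem_range_succ_iff.mp hm)] at hsign
        simp only [Int.reduceNeg, nsmul_eq_mul, mul_one, zero_add, zsmul_eq_mul, Int.cast_mul,
          Int.cast_pow, Int.cast_neg, Int.cast_one, Int.cast_natCast]
        rw [← hsign]
        ring
    _ = 0 := by rw [← hdiff, mul_zero]

theorem sum_range_neg_one_pow_mul_choose_mul_pow_succ (k e : ℕ) :
    ∑ m ∈ range (k + 2), (-1 : R) ^ m * (k + 1).choose m * (m : R) ^ (e + 1) =
      (k + 1) * ∑ r ∈ range (k + 1), (-1 : R) ^ (r + 1) * k.choose r * ((r : R) + 1) ^ e := by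
  rw [sum_range_succ', mul_sum]
  simp only [Nat.cast_zero, ne_eq, Nat.add_eq_zero_iff, one_ne_zero, and_false,
    not_false_eq_true, zero_pow, mul_zero, add_zero]
  refine sum_congr rfl fun r _ => ?_
  have hchoose : ((k + 1).choose (r + 1) : R) * (r + 1) = (k + 1) * k.choose r := by
    exact_mod_cast congrArg (Nat.cast : ℕ → R) (Nat.add_one_mul_choose_eq k r).symm
  push_cast
  linear_combination (-1 : R) ^ (r + 1) * ((r : R) + 1) ^ e * hchoose

theorem sum_range_diag_flip' {M : Type*} [AddCommMonoid M] (n : ℕ) (g : ℕ → ℕ → M) :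
    ∑ s ∈ range n, ∑ q ∈ range (s + 1), g q (s - q) =
      ∑ t ∈ range n, ∑ q ∈ range (n - t), g q t := by
  rw [← sum_range_diag_flip n fun t q => g q t]
  refine sum_congr rfl fun s _ => ?_
  rw [← sum_range_reflect]
  refine sum_congr rfl fun q hq => ?_
  rw [Nat.add_sub_cancel, Nat.sub_sub_self (mem_range_succ_iff.mp hq)]

theorem chiCoeff_succ_self (n : ℕ) :
    chiCoeff (n + 1) (n + 1) = ∑ r ∈ range (n + 1), (-1 : ℚ) ^ (r + 1) * ((r : ℚ) + 1) ^ n *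
      ∑ k ∈ range (n + 1), ((2 : ℚ) ^ n - 2 ^ (n - k)) * k.choose r := by
  have hterm : ∀ k ∈ range (n + 1),
      ((2 : ℚ) ^ n - 2 ^ (n - k)) / ((k : ℚ) + 1) *
          ∑ m ∈ range (k + 2), (-1 : ℚ) ^ m * ((k + 1).choose m : ℚ) * (m : ℚ) ^ (n + 1) =
        ∑ r ∈ range (n + 1), (-1 : ℚ) ^ (r + 1) * ((r : ℚ) + 1) ^ n *
          (((2 : ℚ) ^ n - 2 ^ (n - k)) * k.choose r) := by
    intro k hk
    rw [sum_range_neg_one_pow_mul_choose_mul_pow_succ, ← mul_assoc,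
      div_mul_cancel₀ _ (by positivity), mul_sum]
    rw [← sum_subset (range_subset_range.mpr (mem_range.mp hk)) fun r _ hr => by
      rw [Nat.choose_eq_zero_of_lt (by simpa using hr)]; simp]
    refine sum_congr rfl fun r _ => ?_
    ring
  have hzero : ∀ k ∈ range (n + 1), k ∉ Icc 1 n →
      ((2 : ℚ) ^ n - 2 ^ (n - k)) / ((k : ℚ) + 1) *
          ∑ m ∈ range (k + 2), (-1 : ℚ) ^ m * ((k + 1).choose m : ℚ) * (m : ℚ) ^ (n + 1) = 0 := by
    intro k hk hk'
    obtain rfl : k = 0 := by simp only [mem_range, mem_Icc] at hk hk'; omega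
    simp
  rw [chiCoeff, Nat.sub_self, pow_zero, one_mul, Nat.add_sub_cancel,
    sum_subset (fun k hk => mem_range_succ_iff.mpr (mem_Icc.mp hk).2) hzero,
    sum_congr rfl hterm, sum_comm]
  simp_rw [mul_sum]

theorem neg_one_pow_mul_sigmaCoeff_succ_self {n : ℕ} (hn : n ≠ 0) :
    (-1 : ℚ) ^ (n + 1) * sigmaCoeff (n + 1) (n + 1) =
      ∑ r ∈ range (n + 1), (-1 : ℚ) ^ r * ((r : ℚ) + 1) ^ n *
        ∑ j ∈ range (n - r), ((n + 1).choose j : ℚ) := by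
  have hshift : ∑ p ∈ range n, (-1 : ℚ) ^ (p + 1) * ∑ q ∈ range (p + 2),
        (-1 : ℚ) ^ q * ((n + 1).choose q : ℚ) * ((p + 1 - q : ℕ) : ℚ) ^ n =
      ∑ s ∈ range (n + 1), ∑ q ∈ range (s + 1),
        (-1 : ℚ) ^ (s - q) * ((n + 1).choose q : ℚ) * ((s - q : ℕ) : ℚ) ^ n := by
    rw [sum_range_succ' _ n]
    simp only [zero_add, range_one, zero_tsub, pow_zero, one_mul, CharP.cast_eq_zero, ne_eq, hn,
      not_false_eq_true, zero_pow, mul_zero, sum_const_zero, add_zero]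
    refine sum_congr rfl fun p _ => ?_
    rw [mul_sum]
    refine sum_congr rfl fun q hq => ?_
    rw [← mul_assoc, ← mul_assoc,
      neg_one_pow_mul_neg_one_pow_of_le (Nat.lt_succ_iff.mp (mem_range.mp hq))]
  have hflip : ∑ s ∈ range (n + 1), ∑ q ∈ range (s + 1),
        (-1 : ℚ) ^ (s - q) * ((n + 1).choose q : ℚ) * ((s - q : ℕ) : ℚ) ^ n =
      ∑ t ∈ range (n + 1), ∑ q ∈ range (n + 1 - t),
        (-1 : ℚ) ^ t * ((n + 1).choose q : ℚ) * (t : ℚ) ^ n :=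
    sum_range_diag_flip' (n + 1) fun q t => (-1 : ℚ) ^ t * ((n + 1).choose q : ℚ) * (t : ℚ) ^ n
  rw [sigmaCoeff, Nat.add_sub_cancel, hshift, hflip, ← mul_assoc,
    neg_one_pow_mul_neg_one_pow_of_le (Nat.le_add_right n 1), Nat.add_sub_cancel_left, pow_one,
    sum_range_succ', sum_range_succ]
  simp only [Nat.reduceSubDiff, Nat.cast_add, Nat.cast_one, tsub_zero, pow_zero, one_mul,
    CharP.cast_eq_zero, ne_eq, hn, not_false_eq_true, zero_pow, mul_zero, sum_const_zero,
    add_zero, neg_mul, tsub_self, range_zero, sum_empty]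
  rw [← sum_neg_distrib]
  refine sum_congr rfl fun r _ => ?_
  rw [mul_sum, ← sum_neg_distrib]
  refine sum_congr rfl fun j _ => ?_
  ring

/-- For `l ≥ 2`, `χ_{l,l} = (-1)^l σ_{l,l}`. -/
theorem chi_ll_eq_sign_sigma_ll (l : ℕ) (hl : 2 ≤ l) :
    chiCoeff l l = (-1) ^ l * sigmaCoeff l l := by
  obtain ⟨n, rfl⟩ : ∃ n, l = n + 1 := ⟨l - 1, by omega⟩
  have hn : n ≠ 0 := by omega
  rw [← sub_eq_zero, chiCoeff_succ_self, neg_one_pow_mul_sigmaCoeff_succ_self hn,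
    ← sum_sub_distrib]
  calc _ = ((2 : ℚ) ^ n - 1) * ∑ r ∈ range (n + 1),
        (-1 : ℚ) ^ (r + 1) * (n + 1).choose (r + 1) * ((r + 1 : ℕ) : ℚ) ^ n := by
        rw [mul_sum]
        refine sum_congr rfl fun r hr => ?_
        push_cast
        linear_combination (-1 : ℚ) ^ (r + 1) * ((r : ℚ) + 1) ^ n *
          sum_range_sub_two_pow_mul_choose_add (R := ℚ) (mem_range_succ_iff.mp hr)
    _ = ((2 : ℚ) ^ n - 1) * ∑ m ∈ range (n + 2), (-1 : ℚ) ^ m * (n + 1).choose m * (m : ℚ) ^ n := by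
        rw [sum_range_succ' _ (n + 1)]
        simp [hn]
    _ = 0 := by
        rw [sum_range_neg_one_pow_mul_choose_mul_pow_eq_zero (Nat.lt_succ_self n), mul_zero]
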